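/- Let p, q : [0,1] → ℝ be continuous with p(x)q(y) − p(y)q(x) > 0 whenever 0 ≤ y < x ≤ 1, and let k(x,y) := p(min(x,y))·q(max(x,y)). Fix an integer l ≥ 1 and an odd integer i with 1 ≤ i ≤ 2^l − 1, and define η_{l,i} := (p(c_{l,i+1})q(c_{l,i−1}) − p(c_{l,i−1})q(c_{l,i+1})) / [ (p(c_{l,i})q(c_{l,i−1}) − p(c_{l,i−1})q(c_{l,i}))·(p(c_{l,i+1})q(c_{l,i}) − p(c_{l,i})q(c_{l,i+1})) ], η_{l,i−1} := −1/(p(c_{l,i})q(c_{l,i−1}) − p(c_{l,i−1})q(c_{l,i})), and η_{l,i+1} := −1/(p(c_{l,i+1})q(c_{l,i}) − p(c_{l,i})q(c_{l,i+1})). Then for every x ∈ [0,1], φ_{l,i}(x) = η_{l,i−1}·k(x, c_{l,i−1}) + η_{l,i}·k(x, c_{l,i}) + η_{l,i+1}·k(x, c_{l,i+1}). -/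

import Mathlib

open Matrix

noncomputable section

/-- The dyadic point `c_{l,i} = i · 2^{-l}`. -/
def cpt (l i : ℕ) : ℝ := (i : ℝ) / 2 ^ l

/-- The multidimensional dyadic point `c_{l,i}`. -/
def cpoint {d : ℕ} (l i : Fin d → ℕ) : Fin d → ℝ := fun j => cpt (l j) (i j)

/-- The set `ρ(l)` of odd multi-indices associated with the level multi-index `l`. -/
def rho {d : ℕ} (l : Fin d → ℕ) : Set (Fin d → ℕ) :=
  {i | ∀ j, Odd (i j) ∧ 1 ≤ i j ∧ i j ≤ 2 ^ (l j) - 1}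

/-- The classical sparse grid of level `τ` in dimension `d`. -/
def SGset (d τ : ℕ) : Set (Fin d → ℝ) :=
  {x | ∃ l : Fin d → ℕ, (∀ j, 1 ≤ l j) ∧ (∑ j, l j) ≤ τ + d - 1 ∧
    ∀ j, ∃ i : ℕ, 1 ≤ i ∧ i ≤ 2 ^ (l j) - 1 ∧ x j = cpt (l j) i}

/-- A tensor Markov kernel on `(0,1)^d` satisfying Assumption SL: factors
`p_j, q_j` are continuous on `[0,1]`, positive on `(0,1)`, satisfy the strict
"determinant" positivity (the precise form of `p_j/q_j` strictly increasing with
`p_j, q_j > 0`), are continuously differentiable on `(0,1)`, and both solve the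
Sturm–Liouville equation `(u_j f')' + v_j f = 0` on `(0,1)`. -/
structure TMKernelSL (d : ℕ) where
  p : Fin d → ℝ → ℝ
  q : Fin d → ℝ → ℝ
  cont_p : ∀ j, ContinuousOn (p j) (Set.Icc 0 1)
  cont_q : ∀ j, ContinuousOn (q j) (Set.Icc 0 1)
  pos_p : ∀ j, ∀ x ∈ Set.Ioo (0:ℝ) 1, 0 < p j x
  pos_q : ∀ j, ∀ x ∈ Set.Ioo (0:ℝ) 1, 0 < q j x
  det_pos : ∀ j, ∀ y ∈ Set.Icc (0:ℝ) 1, ∀ x ∈ Set.Icc (0:ℝ) 1, y < x →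
    0 < p j x * q j y - p j y * q j x
  u : Fin d → ℝ → ℝ
  v : Fin d → ℝ → ℝ
  contDiff_p : ∀ j, ContDiffOn ℝ 1 (p j) (Set.Ioo 0 1)
  contDiff_q : ∀ j, ContDiffOn ℝ 1 (q j) (Set.Ioo 0 1)
  contDiff_u : ∀ j, ContDiffOn ℝ 1 (u j) (Set.Ioo 0 1)
  cont_v : ∀ j, ContinuousOn (v j) (Set.Ioo 0 1)
  sl_p : ∀ j, ∀ x ∈ Set.Ioo (0:ℝ) 1,
    deriv (fun t => u j t * deriv (p j) t) x + v j x * p j x = 0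
  sl_q : ∀ j, ∀ x ∈ Set.Ioo (0:ℝ) 1,
    deriv (fun t => u j t * deriv (q j) t) x + v j x * q j x = 0

/-- The tensor Markov kernel `k(x,x') = ∏_j p_j(min) q_j(max)`. -/
def TMKernelSL.k {d : ℕ} (κ : TMKernelSL d) (x x' : Fin d → ℝ) : ℝ :=
  ∏ j, κ.p j (min (x j) (x' j)) * κ.q j (max (x j) (x' j))

/-- The `j`-th one-dimensional factor kernel of a TM kernel. -/
def TMKernelSL.k1 {d : ℕ} (κ : TMKernelSL d) (j : Fin d) (a b : ℝ) : ℝ :=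
  κ.p j (min a b) * κ.q j (max a b)

/-- Kernel matrix of the design `x_1,…,x_n`. -/
def kerMat {d n : ℕ} (κ : TMKernelSL d) (x : Fin n → Fin d → ℝ) :
    Matrix (Fin n) (Fin n) ℝ :=
  Matrix.of fun a b => κ.k (x a) (x b)

/-- Kernel vector `k(z) = (k(z,x_1),…,k(z,x_n))`. -/
def kerVec {d n : ℕ} (κ : TMKernelSL d) (x : Fin n → Fin d → ℝ) (z : Fin d → ℝ) :
    Fin n → ℝ :=
  fun a => κ.k z (x a)

/-- `x_1,…,x_n` is a truncated sparse grid design: the points are distinct, and for the level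
`τ` with `|X_τ^SG| ≤ n < |X_{τ+1}^SG|`, the design contains all of `X_τ^SG` and is contained
in `X_{τ+1}^SG`. -/
def IsTSGDesign {d n : ℕ} (x : Fin n → Fin d → ℝ) : Prop :=
  Function.Injective x ∧
  ∃ τ : ℕ, 1 ≤ τ ∧ (SGset d τ).ncard ≤ n ∧ n < (SGset d (τ + 1)).ncard ∧
    SGset d τ ⊆ Set.range x ∧ Set.range x ⊆ SGset d (τ + 1)

/-- One-dimensional quantity `η_{l,i}` (the squared RKHS norm of the hat function). -/
def eta1 (p q : ℝ → ℝ) (l i : ℕ) : ℝ :=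
  (p (cpt l (i + 1)) * q (cpt l (i - 1)) - p (cpt l (i - 1)) * q (cpt l (i + 1))) /
    ((p (cpt l i) * q (cpt l (i - 1)) - p (cpt l (i - 1)) * q (cpt l i)) *
      (p (cpt l (i + 1)) * q (cpt l i) - p (cpt l i) * q (cpt l (i + 1))))

/-- Multidimensional `η_{l,i} = ∏_j η^{(j)}_{l_j,i_j}`. -/
def etaP {d : ℕ} (p q : Fin d → ℝ → ℝ) (l i : Fin d → ℕ) : ℝ :=
  ∏ j, eta1 (p j) (q j) (l j) (i j)

/-- One-dimensional hat function `φ_{l,i}` associated with `p, q`. -/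
def phi1 (p q : ℝ → ℝ) (l i : ℕ) (x : ℝ) : ℝ :=
  if cpt l (i - 1) < x ∧ x ≤ cpt l i then
    (p x * q (cpt l (i - 1)) - p (cpt l (i - 1)) * q x) /
      (p (cpt l i) * q (cpt l (i - 1)) - p (cpt l (i - 1)) * q (cpt l i))
  else if cpt l i < x ∧ x < cpt l (i + 1) then
    (p (cpt l (i + 1)) * q x - p x * q (cpt l (i + 1))) /
      (p (cpt l (i + 1)) * q (cpt l i) - p (cpt l i) * q (cpt l (i + 1)))
  else 0

/-- Multidimensional hat function `φ_{l,i}(x) = ∏_j φ^{(j)}_{l_j,i_j}(x_j)`. -/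
def phiD {d : ℕ} (p q : Fin d → ℝ → ℝ) (l i : Fin d → ℕ) (x : Fin d → ℝ) : ℝ :=
  ∏ j, phi1 (p j) (q j) (l j) (i j) (x j)

/-- The open hyperrectangle `R_{l,i} = ∏_j (c_{l_j,i_j−1}, c_{l_j,i_j+1})`. -/
def hyperRect {d : ℕ} (l i : Fin d → ℕ) : Set (Fin d → ℝ) :=
  {z | ∀ j, cpt (l j) (i j - 1) < z j ∧ z j < cpt (l j) (i j + 1)}

/-- Number of nonzero entries of a real matrix. -/
def nnzM {α β : Type*} [Fintype α] [Fintype β] (M : Matrix α β ℝ) : ℕ :=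
  Set.ncard {ab : α × β | M ab.1 ab.2 ≠ 0}

end

/-! The section `k(·, y)` is a multiple of `p` left of `y` and of `q` right of it, so on each of
the four intervals cut out by the nodes `a < b < c` both sides are combinations of `p(x)` and
`q(x)`. Comparing coefficients leaves rational identities in the determinants
`W(y, z) = p z q y - p y q z`; outside `(a, c)` it is the Plücker relation
`W(a, c) f(b) = W(b, c) f(a) + W(a, b) f(c)` for `f ∈ {p, q}` that makes the combination vanish. -/

noncomputable def hatFun (p q : ℝ → ℝ) (a b c x : ℝ) : ℝ :=
  if a < x ∧ x ≤ b then (p x * q a - p a * q x) / (p b * q a - p a * q b)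
  else if b < x ∧ x < c then (p c * q x - p x * q c) / (p c * q b - p b * q c)
  else 0

theorem phi1_eq_hatFun (p q : ℝ → ℝ) (l i : ℕ) :
    phi1 p q l i = hatFun p q (cpt l (i - 1)) (cpt l i) (cpt l (i + 1)) :=
  rfl

theorem hatFun_eq_kernel_combination {p q : ℝ → ℝ} {a b c : ℝ} (hab : a < b) (hbc : b < c)
    (hD₁ : p b * q a - p a * q b ≠ 0) (hD₂ : p c * q b - p b * q c ≠ 0) (x : ℝ) :
    hatFun p q a b c x =
      -1 / (p b * q a - p a * q b) * (p (min x a) * q (max x a)) +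
        (p c * q a - p a * q c) / ((p b * q a - p a * q b) * (p c * q b - p b * q c)) *
          (p (min x b) * q (max x b)) +
        -1 / (p c * q b - p b * q c) * (p (min x c) * q (max x c)) := by
  unfold hatFun
  generalize hD₁' : p b * q a - p a * q b = D₁ at hD₁ ⊢
  generalize hD₂' : p c * q b - p b * q c = D₂ at hD₂ ⊢
  rcases le_or_gt x a with hxa | hax
  · have hxb := hxa.trans hab.le
    have hxc := hxb.trans hbc.le
    simp only [min_eq_left, max_eq_right, hxa, hxb, hxc, not_lt.2 hxa, not_lt.2 hxb, false_and,
      if_false]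
    field_simp
    subst hD₁' hD₂'
    ring
  rcases le_or_gt x b with hxb | hbx
  · have hxc := hxb.trans hbc.le
    simp only [min_eq_left, max_eq_right, min_eq_right, max_eq_left, hax.le, hxb, hxc, hax,
      and_self, if_true]
    field_simp
    subst hD₁' hD₂'
    ring
  rcases lt_or_ge x c with hxc | hcx
  · simp only [min_eq_left, max_eq_right, min_eq_right, max_eq_left, hax.le, hbx.le, hxc.le, hbx,
      hxc, not_le.2 hbx, and_false, and_self, if_false, if_true]
    field_simp
    subst hD₁' hD₂'
    ring
  · simp only [min_eq_right, max_eq_left, hax.le, hbx.le, hcx, not_le.2 hbx, not_lt.2 hcx,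
      and_false, if_false]
    field_simp
    subst hD₁' hD₂'
    ring

theorem cpt_strictMono (l : ℕ) : StrictMono (cpt l) := fun i j hij => by
  unfold cpt
  gcongr

theorem cpt_mem_Icc {l i : ℕ} (hi : i ≤ 2 ^ l) : cpt l i ∈ Set.Icc (0 : ℝ) 1 :=
  ⟨by unfold cpt; positivity, div_le_one_of_le₀ (by exact_mod_cast hi) (by positivity)⟩

theorem hat_function_kernel_combination_general (p q : ℝ → ℝ)
    (hpq : ∀ y ∈ Set.Icc (0:ℝ) 1, ∀ x ∈ Set.Icc (0:ℝ) 1, y < x →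
      0 < p x * q y - p y * q x)
    (l i : ℕ) (hi1 : 1 ≤ i) (hi2 : i ≤ 2 ^ l - 1)
    (k : ℝ → ℝ → ℝ) (hk : ∀ a b, k a b = p (min a b) * q (max a b))
    (ηm η0 ηp : ℝ)
    (hηm : ηm = -1 / (p (cpt l i) * q (cpt l (i - 1)) - p (cpt l (i - 1)) * q (cpt l i)))
    (hη0 : η0 = eta1 p q l i)
    (hηp : ηp = -1 / (p (cpt l (i + 1)) * q (cpt l i) - p (cpt l i) * q (cpt l (i + 1)))) :
    ∀ x ∈ Set.Icc (0:ℝ) 1,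
      phi1 p q l i x =
        ηm * k x (cpt l (i - 1)) + η0 * k x (cpt l i) + ηp * k x (cpt l (i + 1)) := by
  intro x _
  have hab : cpt l (i - 1) < cpt l i := cpt_strictMono l (by omega)
  have hbc : cpt l i < cpt l (i + 1) := cpt_strictMono l (by omega)
  have hD₁ := hpq _ (cpt_mem_Icc (by omega)) _ (cpt_mem_Icc (by omega)) hab
  have hD₂ := hpq _ (cpt_mem_Icc (by omega)) _ (cpt_mem_Icc (by omega)) hbc
  rw [phi1_eq_hatFun, hatFun_eq_kernel_combination hab hbc hD₁.ne' hD₂.ne', hηm, hη0, hηp, hk,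
    hk, hk, eta1]

/-- **Hat functions as kernel combinations (eq. (EC.5), Ding & Zhang).** For a
one-dimensional TM kernel `k(x,y) = p(min x y) q(max x y)`, the hat function `φ_{l,i}`
equals the linear combination
`η_{l,i−1} k(·, c_{l,i−1}) + η_{l,i} k(·, c_{l,i}) + η_{l,i+1} k(·, c_{l,i+1})` on `[0,1]`. -/
theorem hat_function_kernel_combination (p q : ℝ → ℝ)
    (hp : ContinuousOn p (Set.Icc 0 1)) (hq : ContinuousOn q (Set.Icc 0 1))
    (hpq : ∀ y ∈ Set.Icc (0:ℝ) 1, ∀ x ∈ Set.Icc (0:ℝ) 1, y < x →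
      0 < p x * q y - p y * q x)
    (l i : ℕ) (hl : 1 ≤ l) (hiodd : Odd i) (hi1 : 1 ≤ i) (hi2 : i ≤ 2 ^ l - 1)
    (k : ℝ → ℝ → ℝ) (hk : ∀ a b, k a b = p (min a b) * q (max a b))
    (ηm η0 ηp : ℝ)
    (hηm : ηm = -1 / (p (cpt l i) * q (cpt l (i - 1)) - p (cpt l (i - 1)) * q (cpt l i)))
    (hη0 : η0 = eta1 p q l i)
    (hηp : ηp = -1 / (p (cpt l (i + 1)) * q (cpt l i) - p (cpt l i) * q (cpt l (i + 1)))) :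
    ∀ x ∈ Set.Icc (0:ℝ) 1,
      phi1 p q l i x =
        ηm * k x (cpt l (i - 1)) + η0 * k x (cpt l i) + ηp * k x (cpt l (i + 1)) :=
  hat_function_kernel_combination_general p q hpq l i hi1 hi2 k hk ηm η0 ηp hηm hη0 hηp
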